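/- Let G be a totally disconnected locally compact Hausdorff topological group and g ∈ G. Then there exists a compact open subgroup of G that is tidy above for g. -/

import Mathlib

open MeasureTheory Pointwise

variable {G : Type*}

/-- The conjugate subgroup `gUg⁻¹`. -/
def conjSubgroup [Group G] (g : G) (U : Subgroup G) : Subgroup G :=
  U.map (MulAut.conj g).toMonoidHom

/-- A subgroup is compact open if its carrier set is compact and open. -/
def Subgroup.IsCompactOpen [Group G] [TopologicalSpace G] (U : Subgroup G) : Prop :=
  IsCompact (U : Set G) ∧ IsOpen (U : Set G)

/-- `U₊ = ⋂_{n ≥ 0} gⁿ U g⁻ⁿ`. -/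
def plusSubgroup [Group G] (g : G) (U : Subgroup G) : Subgroup G :=
  ⨅ n : ℕ, conjSubgroup (g ^ n) U

/-- `U₋ = ⋂_{n ≥ 0} g⁻ⁿ U gⁿ`. -/
def minusSubgroup [Group G] (g : G) (U : Subgroup G) : Subgroup G :=
  ⨅ n : ℕ, conjSubgroup (g⁻¹ ^ n) U

/-- `U` is tidy above for `g` if `[gU₊g⁻¹ : U₊] = [gUg⁻¹ : gUg⁻¹ ∩ U]`. -/
def TidyAbove [Group G] (g : G) (U : Subgroup G) : Prop :=
  (plusSubgroup g U).relIndex (conjSubgroup g (plusSubgroup g U)) = U.relIndex (conjSubgroup g U)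

/-- `U₊₊ = ⋃_{n ≥ 0} gⁿ U₊ g⁻ⁿ` as a set. -/
def plusPlusSet [Group G] (g : G) (U : Subgroup G) : Set G :=
  ⋃ n : ℕ, ((conjSubgroup (g ^ n) (plusSubgroup g U) : Subgroup G) : Set G)

/-- `U₋₋ = ⋃_{n ≥ 0} g⁻ⁿ U₋ gⁿ` as a set. -/
def minusMinusSet [Group G] (g : G) (U : Subgroup G) : Set G :=
  ⋃ n : ℕ, ((conjSubgroup (g⁻¹ ^ n) (minusSubgroup g U) : Subgroup G) : Set G)

/-- `U` is tidy below for `g` if `U₊₊` and `U₋₋` are closed. -/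
def TidyBelow [Group G] [TopologicalSpace G] (g : G) (U : Subgroup G) : Prop :=
  IsClosed (plusPlusSet g U) ∧ IsClosed (minusMinusSet g U)

/-- `U` is tidy for `g` if it is tidy above and tidy below for `g`. -/
def Tidy [Group G] [TopologicalSpace G] (g : G) (U : Subgroup G) : Prop :=
  TidyAbove g U ∧ TidyBelow g U

/-!
Start from any compact open subgroup `V` and shrink it to `Vₙ = ⋂_{k ≤ n} gᵏVg⁻ᵏ`. The indices
`[gVₙg⁻¹ : gVₙg⁻¹ ∩ V]` are finite and non-increasing in `n`, so they are constant from some `N`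
on. Equality of the indices for `Vₙ ≤ V_N` means `gV_Ng⁻¹ ⊆ gVₙg⁻¹ · V`, and a compactness
argument passes this to the intersection: `gV_Ng⁻¹ ⊆ gV₊g⁻¹ · V`, so the index for `V₊` is the
same. Since `(V_N)₊ = V₊` and both `gV_Ng⁻¹ ∩ V_N` and `gV₊g⁻¹ ∩ V₊` are the intersections with
`V`, this says that `V_N` is tidy above.
-/

namespace Subgroup

variable [Group G]

lemma relIndex_eq_of_inf_eq {H H' K : Subgroup G} (h : H ⊓ K = H' ⊓ K) :
    H.relIndex K = H'.relIndex K := by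
  rw [← inf_relIndex_right, h, inf_relIndex_right]

lemma relIndex_eq_relIndex_iff_subset_mul {A B L : Subgroup G} (hAB : A ≤ B)
    (hA : L.relIndex A ≠ 0) :
    L.relIndex A = L.relIndex B ↔ (B : Set G) ⊆ (A : Set G) * L := by
  have : Finite (A ⧸ L.subgroupOf A) := Nat.finite_of_card_ne_zero hA
  set f := quotientSubgroupOfEmbeddingOfLE L hAB
  have hsurj : Function.Surjective f ↔ (B : Set G) ⊆ (A : Set G) * L := by
    refine ⟨fun h b hb => ?_, fun h q => ?_⟩
    · obtain ⟨q, hq⟩ := h (QuotientGroup.mk ⟨b, hb⟩)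
      obtain ⟨a, rfl⟩ := QuotientGroup.mk_surjective q
      rw [quotientSubgroupOfEmbeddingOfLE_apply_mk, QuotientGroup.eq, mem_subgroupOf] at hq
      exact ⟨a, a.2, (a : G)⁻¹ * b, hq, mul_inv_cancel_left _ _⟩
    · obtain ⟨b, rfl⟩ := QuotientGroup.mk_surjective q
      obtain ⟨a, ha, l, hl, hal⟩ := h b.2
      refine ⟨QuotientGroup.mk ⟨a, ha⟩, ?_⟩
      rw [quotientSubgroupOfEmbeddingOfLE_apply_mk, QuotientGroup.eq, mem_subgroupOf]
      simpa [← hal] using hl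
  rw [relIndex, relIndex, index, index, ← hsurj]
  refine ⟨fun h => ?_, fun h => Nat.card_eq_of_bijective f ⟨f.injective, h⟩⟩
  have : Finite (B ⧸ L.subgroupOf B) := Nat.finite_of_card_ne_zero (h ▸ hA)
  exact (f.injective.bijective_of_nat_card_le h.ge).2

variable [TopologicalSpace G]

lemma IsCompactOpen.inf [T2Space G] {H K : Subgroup G} (hH : H.IsCompactOpen)
    (hK : K.IsCompactOpen) : (H ⊓ K).IsCompactOpen :=
  ⟨hH.1.inter_right hK.1.isClosed, hH.2.inter hK.2⟩

lemma relIndex_ne_zero_of_isOpen_of_isCompact [IsTopologicalGroup G] {H K : Subgroup G}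
    (hH : IsOpen (H : Set G)) (hK : IsCompact (K : Set G)) : H.relIndex K ≠ 0 := by
  have : CompactSpace K := isCompact_iff_compactSpace.mp hK
  have : Finite (K ⧸ H.subgroupOf K) :=
    quotient_finite_of_isOpen _ (hH.preimage continuous_subtype_val)
  exact index_ne_zero_of_finite

end Subgroup

section VanDantzig

variable [Group G] [TopologicalSpace G] [IsTopologicalGroup G]

theorem exists_openSubgroup_subset_of_isCompact_isOpen {W : Set G} (hWc : IsCompact W)
    (hWo : IsOpen W) (h1W : 1 ∈ W) : ∃ H : Subgroup G, IsOpen (H : Set G) ∧ (H : Set G) ⊆ W := by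
  obtain ⟨N, hN, hNW⟩ := compact_open_separated_mul_left hWc hWo subset_rfl
  have hsmul : ∀ h ∈ N, h • W ⊆ W := fun h hh => (Set.smul_set_subset_mul hh).trans hNW
  refine ⟨MulAction.stabilizer G W, Subgroup.isOpen_of_mem_nhds _ (g := 1) ?_, fun h hh => ?_⟩
  · filter_upwards [hN, inv_mem_nhds_one G hN] with h hh hh'
    exact (hsmul h hh).antisymm (Set.subset_smul_set_iff.2 (hsmul _ hh'))
  · rw [SetLike.mem_coe, MulAction.mem_stabilizer_iff] at hh
    have := Set.smul_mem_smul_set (a := h) h1W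
    rwa [hh, smul_eq_mul, mul_one] at this

theorem exists_isCompactOpen_subgroup [LocallyCompactSpace G] [T2Space G]
    [TotallyDisconnectedSpace G] : ∃ V : Subgroup G, V.IsCompactOpen := by
  obtain ⟨K, hKc, hK1⟩ := exists_compact_mem_nhds (1 : G)
  obtain ⟨W, hW, h1W, hWK⟩ := loc_compact_Haus_tot_disc_of_zero_dim.mem_nhds_iff.mp hK1
  obtain ⟨H, hHo, hHW⟩ :=
    exists_openSubgroup_subset_of_isCompact_isOpen (hKc.of_isClosed_subset hW.1 hWK) hW.2 h1W
  exact ⟨H, hKc.of_isClosed_subset (H.isClosed_of_isOpen hHo) (hHW.trans hWK), hHo⟩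

end VanDantzig

theorem subset_iInter_mul_of_antitone [Group G] [TopologicalSpace G] [IsTopologicalGroup G]
    [T2Space G] {K : ℕ → Set G} (hK : Antitone K) (hKc : ∀ n, IsCompact (K n)) {S C : Set G}
    (hC : IsClosed C) (h : ∀ n, S ⊆ K n * C) : S ⊆ (⋂ n, K n) * C := by
  intro x hx
  set t : ℕ → Set G := fun n => K n ∩ {y | y⁻¹ * x ∈ C}
  have ht : (⋂ n, t n).Nonempty := by
    refine IsCompact.nonempty_iInter_of_sequence_nonempty_isCompact_isClosed t
      (fun n => Set.inter_subset_inter_left _ (hK n.le_succ)) (fun n => ?_)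
      ((hKc 0).inter_right (hC.preimage (by fun_prop)))
      (fun n => (hKc n).isClosed.inter (hC.preimage (by fun_prop)))
    obtain ⟨y, hy, c, hc, rfl⟩ := h n hx
    exact ⟨y, hy, by simpa using hc⟩
  obtain ⟨y, hy⟩ := ht
  rw [Set.mem_iInter] at hy
  exact ⟨y, Set.mem_iInter.2 fun n => (hy n).1, y⁻¹ * x, (hy 0).2, mul_inv_cancel_left y x⟩

section Conj

variable [Group G]

lemma mem_conjSubgroup {g x : G} {U : Subgroup G} : x ∈ conjSubgroup g U ↔ g⁻¹ * x * g ∈ U := by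
  rw [conjSubgroup, Subgroup.mem_map_equiv, MulAut.conj_symm_apply]

@[simp]
lemma conjSubgroup_one (U : Subgroup G) : conjSubgroup 1 U = U := by
  ext x; simp [mem_conjSubgroup]

lemma conjSubgroup_conjSubgroup (a b : G) (U : Subgroup G) :
    conjSubgroup a (conjSubgroup b U) = conjSubgroup (a * b) U := by
  ext x; simp [mem_conjSubgroup, mul_assoc]

lemma conjSubgroup_mono (g : G) {U V : Subgroup G} (h : U ≤ V) :
    conjSubgroup g U ≤ conjSubgroup g V :=
  Subgroup.map_mono h

lemma conjSubgroup_iInf {ι : Sort*} (g : G) (U : ι → Subgroup G) :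
    conjSubgroup g (⨅ i, U i) = ⨅ i, conjSubgroup g (U i) := by
  ext x; simp [mem_conjSubgroup, Subgroup.mem_iInf]

lemma coe_conjSubgroup (g : G) (U : Subgroup G) :
    (conjSubgroup g U : Set G) = (fun x => g * x * g⁻¹) '' U := by
  rw [conjSubgroup, Subgroup.coe_map]
  rfl

variable [TopologicalSpace G] [IsTopologicalGroup G]

lemma isCompact_conjSubgroup (g : G) {U : Subgroup G} (h : IsCompact (U : Set G)) :
    IsCompact (conjSubgroup g U : Set G) := by
  rw [coe_conjSubgroup]
  exact h.image (by fun_prop)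

lemma Subgroup.IsCompactOpen.conjSubgroup (g : G) {U : Subgroup G} (h : U.IsCompactOpen) :
    (conjSubgroup g U).IsCompactOpen := by
  refine ⟨isCompact_conjSubgroup g h.1, ?_⟩
  rw [coe_conjSubgroup]
  exact ((isOpenMap_mul_right g⁻¹).comp (isOpenMap_mul_left g)) _ h.2

end Conj

section Plus

variable [Group G] (g : G)

lemma plusSubgroup_le (U : Subgroup G) : plusSubgroup g U ≤ U :=
  (iInf_le _ 0).trans_eq (by rw [pow_zero, conjSubgroup_one])

lemma plusSubgroup_mono {U V : Subgroup G} (h : U ≤ V) : plusSubgroup g U ≤ plusSubgroup g V :=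
  iInf_mono fun _ => conjSubgroup_mono _ h

lemma conjSubgroup_pow_plusSubgroup (U : Subgroup G) (m : ℕ) :
    conjSubgroup (g ^ m) (plusSubgroup g U) = ⨅ n, conjSubgroup (g ^ (m + n)) U := by
  simp only [plusSubgroup, conjSubgroup_iInf, conjSubgroup_conjSubgroup, pow_add]

lemma conjSubgroup_plusSubgroup (U : Subgroup G) :
    conjSubgroup g (plusSubgroup g U) = ⨅ n, conjSubgroup (g ^ (n + 1)) U := by
  simp only [plusSubgroup, conjSubgroup_iInf, conjSubgroup_conjSubgroup, pow_succ']

lemma plusSubgroup_le_conjSubgroup_pow (U : Subgroup G) (m : ℕ) :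
    plusSubgroup g U ≤ conjSubgroup (g ^ m) (plusSubgroup g U) := by
  rw [conjSubgroup_pow_plusSubgroup]
  exact le_iInf fun n => iInf_le _ (m + n)

lemma plusSubgroup_le_conjSubgroup (U : Subgroup G) :
    plusSubgroup g U ≤ conjSubgroup g (plusSubgroup g U) := by
  simpa using plusSubgroup_le_conjSubgroup_pow g U 1

lemma plusSubgroup_eq_inf_conjSubgroup (U : Subgroup G) :
    plusSubgroup g U = U ⊓ conjSubgroup g (plusSubgroup g U) := by
  refine le_antisymm (le_inf (plusSubgroup_le g U) (plusSubgroup_le_conjSubgroup g U))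
    (le_iInf fun n => ?_)
  cases n with
  | zero => simp
  | succ n =>
    rw [conjSubgroup_plusSubgroup]
    exact inf_le_right.trans (iInf_le _ n)

lemma plusSubgroup_inf_conjSubgroup (U : Subgroup G) :
    plusSubgroup g U ⊓ conjSubgroup g (plusSubgroup g U) =
      U ⊓ conjSubgroup g (plusSubgroup g U) := by
  rw [← plusSubgroup_eq_inf_conjSubgroup, inf_eq_left]
  exact plusSubgroup_le_conjSubgroup g U

lemma plusSubgroup_eq_of_le_of_le {U V : Subgroup G} (hVU : plusSubgroup g V ≤ U) (hUV : U ≤ V) :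
    plusSubgroup g U = plusSubgroup g V :=
  (plusSubgroup_mono g hUV).antisymm <|
    le_iInf fun n => (plusSubgroup_le_conjSubgroup_pow g V n).trans (conjSubgroup_mono _ hVU)

/-- `partialPlusSubgroup g V n = ⋂_{k ≤ n} gᵏVg⁻ᵏ`. -/
def partialPlusSubgroup (V : Subgroup G) : ℕ → Subgroup G
  | 0 => V
  | n + 1 => V ⊓ conjSubgroup g (partialPlusSubgroup V n)

variable (V : Subgroup G)

lemma partialPlusSubgroup_le (n : ℕ) : partialPlusSubgroup g V n ≤ V := by
  cases n with
  | zero => exact le_rfl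
  | succ n => exact inf_le_left

lemma partialPlusSubgroup_antitone : Antitone (partialPlusSubgroup g V) := by
  refine antitone_nat_of_succ_le fun n => ?_
  induction n with
  | zero => exact inf_le_left
  | succ n ih => exact inf_le_inf_left V (conjSubgroup_mono g ih)

lemma partialPlusSubgroup_le_conjSubgroup_pow (n : ℕ) :
    partialPlusSubgroup g V n ≤ conjSubgroup (g ^ n) V := by
  induction n with
  | zero => simp [partialPlusSubgroup]
  | succ n ih =>
    rw [pow_succ', ← conjSubgroup_conjSubgroup]
    exact inf_le_right.trans (conjSubgroup_mono g ih)

lemma plusSubgroup_le_partialPlusSubgroup (n : ℕ) :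
    plusSubgroup g V ≤ partialPlusSubgroup g V n := by
  induction n with
  | zero => exact plusSubgroup_le g V
  | succ n ih =>
    rw [plusSubgroup_eq_inf_conjSubgroup]
    exact inf_le_inf_left V (conjSubgroup_mono g ih)

lemma iInf_partialPlusSubgroup : ⨅ n, partialPlusSubgroup g V n = plusSubgroup g V :=
  (iInf_mono (partialPlusSubgroup_le_conjSubgroup_pow g V)).antisymm
    (le_iInf (plusSubgroup_le_partialPlusSubgroup g V))

lemma plusSubgroup_partialPlusSubgroup (n : ℕ) :
    plusSubgroup g (partialPlusSubgroup g V n) = plusSubgroup g V :=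
  plusSubgroup_eq_of_le_of_le g (plusSubgroup_le_partialPlusSubgroup g V n)
    (partialPlusSubgroup_le g V n)

lemma partialPlusSubgroup_inf_conjSubgroup (n : ℕ) :
    partialPlusSubgroup g V n ⊓ conjSubgroup g (partialPlusSubgroup g V n) =
      V ⊓ conjSubgroup g (partialPlusSubgroup g V n) :=
  le_antisymm (inf_le_inf_right _ (partialPlusSubgroup_le g V n))
    (le_inf (partialPlusSubgroup_antitone g V n.le_succ) inf_le_right)

lemma tidyAbove_partialPlusSubgroup_iff (n : ℕ) :
    TidyAbove g (partialPlusSubgroup g V n) ↔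
      V.relIndex (conjSubgroup g (plusSubgroup g V)) =
        V.relIndex (conjSubgroup g (partialPlusSubgroup g V n)) := by
  rw [TidyAbove, plusSubgroup_partialPlusSubgroup,
    Subgroup.relIndex_eq_of_inf_eq (plusSubgroup_inf_conjSubgroup g V),
    Subgroup.relIndex_eq_of_inf_eq (partialPlusSubgroup_inf_conjSubgroup g V n)]

end Plus

section Tidy

variable [Group G] [TopologicalSpace G] [IsTopologicalGroup G] [T2Space G] (g : G)
  {V : Subgroup G}

lemma Subgroup.IsCompactOpen.partialPlusSubgroup (hV : V.IsCompactOpen) (n : ℕ) :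
    (partialPlusSubgroup g V n).IsCompactOpen := by
  induction n with
  | zero => exact hV
  | succ n ih => exact hV.inf (ih.conjSubgroup g)

lemma relIndex_conjSubgroup_partialPlusSubgroup_ne_zero (hV : V.IsCompactOpen) (n : ℕ) :
    V.relIndex (conjSubgroup g (partialPlusSubgroup g V n)) ≠ 0 :=
  Subgroup.relIndex_ne_zero_of_isOpen_of_isCompact hV.2
    ((hV.partialPlusSubgroup g n).conjSubgroup g).1

lemma antitone_relIndex_conjSubgroup_partialPlusSubgroup (hV : V.IsCompactOpen) :
    Antitone fun n => V.relIndex (conjSubgroup g (partialPlusSubgroup g V n)) :=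
  fun _ _ h => Subgroup.relIndex_le_of_le_right
    (conjSubgroup_mono g (partialPlusSubgroup_antitone g V h))
    (relIndex_conjSubgroup_partialPlusSubgroup_ne_zero g hV _)

theorem tidyAbove_partialPlusSubgroup_of_relIndex_eq (hV : V.IsCompactOpen) {N : ℕ}
    (hN : ∀ n, N ≤ n → V.relIndex (conjSubgroup g (partialPlusSubgroup g V N)) =
      V.relIndex (conjSubgroup g (partialPlusSubgroup g V n))) :
    TidyAbove g (partialPlusSubgroup g V N) := by
  set W : ℕ → Subgroup G := fun n => conjSubgroup g (partialPlusSubgroup g V n)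
  have hW : Antitone W := fun _ _ h => conjSubgroup_mono g (partialPlusSubgroup_antitone g V h)
  have hfin := relIndex_conjSubgroup_partialPlusSubgroup_ne_zero g hV
  have hsub : ∀ n, (W N : Set G) ⊆ W n * V := by
    intro n
    rcases le_total N n with h | h
    · exact (Subgroup.relIndex_eq_relIndex_iff_subset_mul (hW h) (hfin n)).1 (hN n h).symm
    · exact (SetLike.coe_subset_coe.2 (hW h)).trans (Set.subset_mul_left _ V.one_mem)
  have hP : (W N : Set G) ⊆ conjSubgroup g (plusSubgroup g V) * V := by
    rw [← iInf_partialPlusSubgroup, conjSubgroup_iInf, Subgroup.coe_iInf]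
    exact subset_iInter_mul_of_antitone (fun _ _ h => hW h)
      (fun n => ((hV.partialPlusSubgroup g n).conjSubgroup g).1) hV.1.isClosed hsub
  have hle : conjSubgroup g (plusSubgroup g V) ≤ W N :=
    conjSubgroup_mono g (plusSubgroup_le_partialPlusSubgroup g V N)
  rw [tidyAbove_partialPlusSubgroup_iff]
  exact (Subgroup.relIndex_eq_relIndex_iff_subset_mul hle
    fun h => hfin N (Subgroup.relIndex_eq_zero_of_le_right hle h)).2 hP

end Tidy

/-- There exists a compact open subgroup tidy above for `g`. -/
theorem exists_tidyAbove
    [Group G] [TopologicalSpace G] [IsTopologicalGroup G] [LocallyCompactSpace G] [T2Space G]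
    [TotallyDisconnectedSpace G] (g : G) :
    ∃ U : Subgroup G, U.IsCompactOpen ∧ TidyAbove g U := by
  obtain ⟨V, hV⟩ := exists_isCompactOpen_subgroup (G := G)
  obtain ⟨N, hN⟩ := WellFoundedLT.antitone_chain_condition
    (antitone_relIndex_conjSubgroup_partialPlusSubgroup g hV)
  exact ⟨_, hV.partialPlusSubgroup g N, tidyAbove_partialPlusSubgroup_of_relIndex_eq g hV hN⟩
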